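/- Let p be an odd prime and n ≥ 1, and let X = (X₁,…,X_n) and D = (D₁,…,D_n) be independent and each uniformly distributed on {0,1}^n. Then the total variation distance between the distribution of (Σ_{i=1}^n X_i·(−1)^{D_i}) mod p on ZMod p and the uniform distribution on ZMod p is at most e^{−n/8} + √p · e^{−n/(4p²)}. -/

import Mathlib

open Finset

/-- Distribution of `f(U)` for `U` uniform on a finite sample space `Ω`. -/
noncomputable def distOn {Ω : Type*} [Fintype Ω] {S : Type*} [Fintype S] [DecidableEq S]
    (f : Ω → S) (a : S) : ℝ :=
  ((univ.filter (fun u => f u = a)).card : ℝ) / (Fintype.card Ω)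

/-- Total variation distance between two distributions on a finite set. -/
noncomputable def tvd {S : Type*} [Fintype S] (μ ν : S → ℝ) : ℝ :=
  (1 / 2) * ∑ a, |μ a - ν a|

section Aux

open ZMod AddChar Complex

lemma sin_lb (p v : ℕ) (hp : 3 ≤ p) (h1 : 1 ≤ v) (h2 : v ≤ p - 1) :
    (2 : ℝ)/p ≤ Real.sin (Real.pi * v / p) := by
  have hp0 : (0:ℝ) < p := by positivity
  have hpi := Real.pi_pos
  have main : ∀ w : ℕ, 1 ≤ w → 2 * w ≤ p → (2:ℝ)/p ≤ Real.sin (Real.pi * w / p) := by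
    intro w hw1 hw2
    have hle : Real.pi * w / p ≤ Real.pi / 2 := by
      rw [div_le_div_iff₀ hp0 two_pos]
      have : (2:ℝ) * w ≤ p := by exact_mod_cast hw2
      nlinarith
    have h0 : 0 ≤ Real.pi * w / p := by positivity
    have hJ := Real.mul_le_sin h0 hle
    have key : 2/Real.pi * (Real.pi * w / p) = 2*w/p := by
      field_simp
    have hw1' : (1:ℝ) ≤ w := by exact_mod_cast hw1
    rw [key] at hJ
    refine le_trans ?_ hJ
    rw [div_le_div_iff₀ hp0 hp0]
    nlinarith
  rcases le_or_gt (2*v) p with hv | hv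
  · exact main v h1 hv
  · have hsym : Real.sin (Real.pi * v / p) = Real.sin (Real.pi * (p - v : ℕ) / p) := by
      rw [← Real.sin_pi_sub]
      congr 1
      have hvp : v ≤ p := by omega
      push_cast [hvp]
      field_simp
    rw [hsym]
    exact main (p - v) (by omega) (by omega)

lemma map_sum' (p : ℕ) [NeZero p] {ι : Type} (s : Finset ι) (f : ι → ZMod p) :
    ZMod.stdAddChar (∑ i ∈ s, f i) = ∏ i ∈ s, ZMod.stdAddChar (f i) := by
  classical
  induction s using Finset.cons_induction with
  | empty => simp
  | cons a s ha ih => simp [Finset.sum_insert ha, Finset.prod_insert ha,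
      AddChar.map_add_eq_mul, ih]

lemma Sfact (p n : ℕ) [NeZero p] (t : ZMod p) :
    ∑ u : (Fin n → Bool) × (Fin n → Bool),
      ZMod.stdAddChar (t * (((∑ i, (if u.1 i then 1 else 0 : ℤ) * (if u.2 i then -1 else 1)) : ℤ) : ZMod p))
    = (2 + ZMod.stdAddChar t + ZMod.stdAddChar (-t)) ^ n := by
  classical
  set ψ := (ZMod.stdAddChar : AddChar (ZMod p) ℂ)
  have hbool : ∑ b : Bool × Bool,
      ψ (t * (((if b.1 then 1 else 0 : ℤ) * (if b.2 then -1 else 1) : ℤ) : ZMod p))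
      = 2 + ψ t + ψ (-t) := by
    rw [Fintype.sum_prod_type]
    simp only [Fintype.sum_bool]
    norm_num
    ring
  calc ∑ u : (Fin n → Bool) × (Fin n → Bool),
      ψ (t * (((∑ i, (if u.1 i then 1 else 0 : ℤ) * (if u.2 i then -1 else 1)) : ℤ) : ZMod p))
      = ∑ u : (Fin n → Bool) × (Fin n → Bool),
        ∏ i, ψ (t * (((if u.1 i then 1 else 0 : ℤ) * (if u.2 i then -1 else 1) : ℤ) : ZMod p)) := by
        refine Finset.sum_congr rfl fun u _ => ?_
        rw [show t * (((∑ i, (if u.1 i then 1 else 0 : ℤ) * (if u.2 i then -1 else 1)) : ℤ) : ZMod p)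
            = ∑ i, t * (((if u.1 i then 1 else 0 : ℤ) * (if u.2 i then -1 else 1) : ℤ) : ZMod p) by
          push_cast
          rw [Finset.mul_sum]]
        exact map_sum' p _ _
    _ = ∑ w : Fin n → Bool × Bool,
        ∏ i, ψ (t * (((if (w i).1 then 1 else 0 : ℤ) * (if (w i).2 then -1 else 1) : ℤ) : ZMod p)) := by
        refine (Fintype.sum_equiv (Equiv.arrowProdEquivProdArrow (Fin n) (fun _ => Bool) (fun _ => Bool)) _ _ fun w => ?_).symm
        rfl
    _ = (∑ b : Bool × Bool,
        ψ (t * (((if b.1 then 1 else 0 : ℤ) * (if b.2 then -1 else 1) : ℤ) : ZMod p))) ^ n := by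
        rw [Fintype.sum_pow]
    _ = _ := by rw [hbool]

lemma gbound (p : ℕ) [NeZero p] (hp3 : 3 ≤ p) (t : ZMod p) (ht : t ≠ 0) :
    ‖2 + ZMod.stdAddChar t + ZMod.stdAddChar (-t)‖
      ≤ 4 * Real.exp (-4/(p:ℝ)^2) := by
  set ψ := (ZMod.stdAddChar : AddChar (ZMod p) ℂ)
  set θ : ℝ := 2 * Real.pi * t.val / p with hθ
  have hp0 : (0:ℝ) < p := by positivity
  have h1 : ψ t = Complex.exp ((θ : ℂ) * Complex.I) := by
    rw [show ψ t = ZMod.stdAddChar t from rfl, ZMod.stdAddChar_apply, ZMod.toCircle_apply, hθ]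
    push_cast
    ring_nf
  have h2 : ψ (-t) = Complex.exp ((-θ : ℂ) * Complex.I) := by
    have h : (((-(t.val : ℤ)) : ℤ) : ZMod p) = -t := by
      push_cast [ZMod.natCast_zmod_val]
      ring
    rw [show ψ (-t) = ZMod.stdAddChar (-t) from rfl, ← h, ZMod.stdAddChar_coe, hθ]
    push_cast
    ring_nf
  have hreal : (2 : ℂ) + ψ t + ψ (-t) = ((2 + 2 * Real.cos θ : ℝ) : ℂ) := by
    rw [h1, h2, Complex.exp_mul_I, Complex.exp_mul_I]
    push_cast
    simp only [Complex.cos_neg, Complex.sin_neg, Complex.ofReal_cos]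
    ring
  rw [hreal, Complex.norm_real, Real.norm_eq_abs]
  have hcos1 : -1 ≤ Real.cos θ := Real.neg_one_le_cos θ
  rw [_root_.abs_of_nonneg (by linarith)]
  -- now real inequality
  set x : ℝ := Real.pi * t.val / p with hx
  have hθx : θ = 2 * x := by rw [hθ, hx]; ring
  have hsin : (2:ℝ)/p ≤ Real.sin x := by
    refine sin_lb p t.val hp3 ?_ ?_
    · have : t.val ≠ 0 := fun h => ht (by rw [← ZMod.natCast_zmod_val t, h]; simp)
      omega
    · have := ZMod.val_lt t
      omega
  have hcos2x : Real.cos θ = 1 - 2 * Real.sin x ^ 2 := by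
    rw [hθx, Real.cos_two_mul]
    have := Real.sin_sq_add_cos_sq x
    nlinarith
  have hexp : -4/(p:ℝ)^2 + 1 ≤ Real.exp (-4/(p:ℝ)^2) := Real.add_one_le_exp _
  have hs2 : (2/ (p:ℝ))^2 ≤ Real.sin x ^ 2 := by
    have h0 : (0:ℝ) ≤ 2/p := by positivity
    nlinarith
  have hs2' : 4/(p:ℝ)^2 ≤ Real.sin x ^ 2 := by
    refine le_trans (le_of_eq ?_) hs2
    field_simp
    norm_num
  have hneg : -4/(p:ℝ)^2 = -(4/(p:ℝ)^2) := by ring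
  linarith [hcos2x, hs2', hexp, hneg]

lemma pointwise (p n : ℕ) [NeZero p] (hp3 : 3 ≤ p) (a : ZMod p) :
    |distOn (fun XD : (Fin n → Bool) × (Fin n → Bool) =>
          (((∑ i, (if XD.1 i then 1 else 0 : ℤ) * (if XD.2 i then -1 else 1)) : ℤ)
            : ZMod p)) a - 1/(p:ℝ)| ≤ Real.exp (-(4*(n:ℝ))/(p:ℝ)^2) := by
  classical
  set ψ := (ZMod.stdAddChar : AddChar (ZMod p) ℂ)
  set F : (Fin n → Bool) × (Fin n → Bool) → ZMod p := fun XD =>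
    (((∑ i, (if XD.1 i then 1 else 0 : ℤ) * (if XD.2 i then -1 else 1)) : ℤ) : ZMod p) with hF
  set C : ℕ := (univ.filter fun u => F u = a).card with hC
  have hp0 : (0:ℝ) < p := by positivity
  set E : ℝ := Real.exp (-4/(p:ℝ)^2) with hE
  have hE0 : 0 ≤ E := Real.exp_nonneg _
  -- orthogonality
  have h1 : ∀ b : ZMod p, ∑ t : ZMod p, ψ (t * b) = if b = 0 then (p : ℂ) else 0 := by
    intro b
    split_ifs with h
    · simp [h, ZMod.card]
    · simp_rw [mul_comm]
      exact AddChar.sum_eq_zero_of_ne_one (ZMod.isPrimitive_stdAddChar p h)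
  -- key identity
  have hkey : (p:ℂ) * C = ∑ t : ZMod p, (2 + ψ t + ψ (-t))^n * ψ (-(t*a)) := by
    have step1 : ∀ t : ZMod p, (2 + ψ t + ψ (-t))^n * ψ (-(t*a))
        = ∑ u, ψ (t * (F u - a)) := by
      intro t
      rw [← Sfact p n t, Finset.sum_mul]
      refine Finset.sum_congr rfl fun u _ => ?_
      rw [← AddChar.map_add_eq_mul]
      congr 1
      ring
    rw [Finset.sum_congr rfl fun t _ => step1 t, Finset.sum_comm]
    have step2 : ∀ u, ∑ t : ZMod p, ψ (t * (F u - a)) = if F u = a then (p:ℂ) else 0 := by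
      intro u
      rw [h1 (F u - a)]
      simp [sub_eq_zero]
    rw [Finset.sum_congr rfl fun u _ => step2 u, ← Finset.sum_filter, Finset.sum_const,
      nsmul_eq_mul, mul_comm]
  -- split off t = 0
  have hzero : ((2:ℂ) + ψ 0 + ψ (-0))^n * ψ (-(0*a)) = 4^n := by
    simp only [neg_zero, AddChar.map_zero_eq_one, zero_mul]
    norm_num
  have hsplit : (p:ℂ) * C - 4^n
      = ∑ t ∈ univ.erase (0 : ZMod p), (2 + ψ t + ψ (-t))^n * ψ (-(t*a)) := by
    rw [hkey, ← Finset.add_sum_erase univ _ (mem_univ (0 : ZMod p)), hzero]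
    ring
  -- bound
  have habs : ‖(p:ℂ) * C - 4^n‖ ≤ (p:ℝ) * (4 * E)^n := by
    rw [hsplit]
    refine le_trans (norm_sum_le _ _) ?_
    have hterm : ∀ t ∈ univ.erase (0 : ZMod p),
        ‖(2 + ψ t + ψ (-t))^n * ψ (-(t*a))‖ ≤ (4 * E)^n := by
      intro t ht
      rw [norm_mul, norm_pow]
      have habs1 : ‖ψ (-(t*a))‖ = 1 := by
        rw [show ψ (-(t*a)) = ZMod.stdAddChar (-(t*a)) from rfl, ZMod.stdAddChar_apply]
        exact Circle.norm_coe _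
      rw [habs1, mul_one]
      exact pow_le_pow_left₀ (norm_nonneg _) (gbound p hp3 t (Finset.mem_erase.1 ht).1) n
    refine le_trans (Finset.sum_le_sum hterm) ?_
    rw [Finset.sum_const, nsmul_eq_mul]
    have hcard : ((univ.erase (0 : ZMod p)).card : ℝ) ≤ p := by
      rw [Finset.card_erase_of_mem (mem_univ _), Finset.card_univ, ZMod.card]
      have := Nat.sub_le p 1
      exact_mod_cast le_trans (by exact_mod_cast this) le_rfl
    have h4E : (0:ℝ) ≤ (4*E)^n := by positivity
    exact mul_le_mul_of_nonneg_right hcard h4E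
  -- back to reals
  have hreal : |(p:ℝ) * C - 4^n| ≤ (p:ℝ) * (4*E)^n := by
    have : ((↑((p:ℝ) * C - 4^n) : ℂ)) = (p:ℂ) * C - 4^n := by push_cast; ring
    rw [← Real.norm_eq_abs, ← Complex.norm_real, this]
    exact habs
  have hcardΩ : (Fintype.card ((Fin n → Bool) × (Fin n → Bool)) : ℝ) = 4^n := by
    simp only [Fintype.card_prod, Fintype.card_fun, Fintype.card_bool, Fintype.card_fin]
    push_cast
    rw [← mul_pow]
    norm_num
  have hdist : distOn F a = (C:ℝ) / 4^n := by
    rw [distOn, hcardΩ, hC]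
  have h4n : (0:ℝ) < 4^n := by positivity
  have hgoal : |distOn F a - 1/(p:ℝ)| ≤ E^n := by
    rw [hdist]
    have heq : (C:ℝ)/4^n - 1/p = ((p:ℝ)*C - 4^n) / ((p:ℝ) * 4^n) := by
      field_simp
    rw [heq, abs_div,
      _root_.abs_of_pos (show (0:ℝ) < (p:ℝ) * 4^n by positivity),
      div_le_iff₀ (show (0:ℝ) < (p:ℝ) * 4^n by positivity)]
    calc |(p:ℝ)*C - 4^n| ≤ (p:ℝ) * (4*E)^n := hreal
      _ = E^n * ((p:ℝ) * 4^n) := by rw [mul_pow]; ring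
  refine le_trans hgoal ?_
  rw [hE, ← Real.exp_nat_mul]
  apply le_of_eq
  congr 1
  field_simp

end Aux

theorem stmt11 (p : ℕ) (hp : p.Prime) (hodd : Odd p) [NeZero p]
    (n : ℕ) (hn : 1 ≤ n) :
    tvd (distOn fun XD : (Fin n → Bool) × (Fin n → Bool) =>
          (((∑ i, (if XD.1 i then 1 else 0 : ℤ) * (if XD.2 i then -1 else 1)) : ℤ)
            : ZMod p))
        (fun _ : ZMod p => 1 / (p : ℝ))
      ≤ Real.exp (-(n : ℝ) / 8) +
          Real.sqrt p * Real.exp (-(n : ℝ) / (4 * (p : ℝ) ^ 2)) := by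
  classical
  have hp3 : 3 ≤ p := by
    have h2 := hp.two_le
    have : p ≠ 2 := by
      rintro rfl
      exact (Nat.not_odd_iff_even.2 (by decide)) hodd
    omega
  have hp0 : (0:ℝ) < p := by positivity
  set F : (Fin n → Bool) × (Fin n → Bool) → ZMod p := fun XD =>
    (((∑ i, (if XD.1 i then 1 else 0 : ℤ) * (if XD.2 i then -1 else 1)) : ℤ) : ZMod p) with hF
  set E : ℝ := Real.exp (-(n : ℝ) / (4 * (p : ℝ) ^ 2)) with hE
  set s : ℝ := Real.sqrt p with hs
  have hs0 : 0 < s := Real.sqrt_pos.2 hp0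
  have hss : s * s = p := Real.mul_self_sqrt (le_of_lt hp0)
  have hE0 : 0 < E := Real.exp_pos _
  have hE1 : E ≤ 1 := by
    rw [hE, Real.exp_le_one_iff]
    have : (0:ℝ) ≤ (n:ℝ) := Nat.cast_nonneg n
    apply div_nonpos_of_nonpos_of_nonneg <;> [linarith; positivity]
  have hfirst : (0:ℝ) ≤ Real.exp (-(n : ℝ) / 8) := Real.exp_nonneg _
  rcases le_or_gt 1 (s * E) with hcase | hcase
  · -- trivial case : tvd ≤ 1
    have hsum1 : ∑ a : ZMod p, distOn F a = 1 := by
      simp only [distOn]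
      rw [← Finset.sum_div, ← Nat.cast_sum,
        ← Finset.card_eq_sum_card_fiberwise (fun x _ => Finset.mem_univ (F x)),
        Finset.card_univ]
      have hpos : (0:ℝ) < (Fintype.card ((Fin n → Bool) × (Fin n → Bool)) : ℝ) :=
        Nat.cast_pos.2 Fintype.card_pos
      field_simp
    have htvd1 : tvd (distOn F) (fun _ : ZMod p => 1 / (p:ℝ)) ≤ 1 := by
      rw [tvd]
      have hbnd : ∀ a : ZMod p, |distOn F a - 1/(p:ℝ)| ≤ distOn F a + 1/p := by
        intro a
        have h0 : 0 ≤ distOn F a := by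
          rw [distOn]; positivity
        have h1 : (0:ℝ) ≤ 1/p := by positivity
        rw [abs_le]; constructor <;> linarith
      have := Finset.sum_le_sum (s := Finset.univ) (fun a _ => hbnd a)
      rw [Finset.sum_add_distrib, hsum1, Finset.sum_const, Finset.card_univ, ZMod.card,
        nsmul_eq_mul] at this
      have hpp : (p:ℝ) * (1/p) = 1 := by field_simp
      rw [hpp] at this
      linarith
    calc tvd (distOn F) (fun _ : ZMod p => 1 / (p:ℝ)) ≤ 1 := htvd1
      _ ≤ s * E := hcase
      _ ≤ _ := by linarith
  · -- main case
    have htvd : tvd (distOn F) (fun _ : ZMod p => 1 / (p:ℝ))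
        ≤ (1/2) * ((p:ℝ) * Real.exp (-(4*(n:ℝ))/(p:ℝ)^2)) := by
      rw [tvd]
      have := Finset.sum_le_sum (s := Finset.univ) (fun a _ => pointwise p n hp3 a)
      rw [Finset.sum_const, Finset.card_univ, ZMod.card, nsmul_eq_mul] at this
      linarith
    have hE16 : Real.exp (-(4*(n:ℝ))/(p:ℝ)^2) = E^16 := by
      rw [hE, ← Real.exp_nat_mul]
      congr 1
      field_simp
      ring
    rw [hE16] at htvd
    have h16 : E^16 ≤ E^2 := pow_le_pow_of_le_one (le_of_lt hE0) hE1 (by norm_num)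
    have h2 : (p:ℝ) * E^2 = (s*E)^2 := by rw [← hss]; ring
    have h3 : (s*E)^2 ≤ s*E := by
      have hse : (0:ℝ) ≤ s*E := le_of_lt (mul_pos hs0 hE0)
      nlinarith [mul_le_mul_of_nonneg_left hcase.le hse]
    have h4 : (p:ℝ) * E^16 ≤ (p:ℝ) * E^2 :=
      mul_le_mul_of_nonneg_left h16 (le_of_lt hp0)
    calc tvd (distOn F) (fun _ : ZMod p => 1 / (p:ℝ)) ≤ (1/2) * ((p:ℝ) * E^16) := htvd
      _ ≤ s * E := by nlinarith
      _ ≤ _ := by linarith
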